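/- Let A: S^d → R^m be a linear operator on symmetric d×d matrices satisfying the restricted isometry property of order r+2r' with constant δ. Let V ∈ R^{d×r'} have orthonormal columns. Then for every symmetric matrix Z of rank at most r, ‖[(I − A*A)(Z)] V‖_F ≤ δ ‖Z‖_F. -/

import Mathlib

open scoped BigOperators
open Matrix

noncomputable def frobNorm {d₁ d₂ : ℕ} (A : Matrix (Fin d₁) (Fin d₂) ℝ) : ℝ :=
  Real.sqrt (∑ i, ∑ j, A i j ^ 2)

noncomputable def vecNorm {m : ℕ} (y : Fin m → ℝ) : ℝ :=
  Real.sqrt (∑ i, y i ^ 2)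

noncomputable def specNorm {d₁ d₂ : ℕ} (A : Matrix (Fin d₁) (Fin d₂) ℝ) : ℝ :=
  ‖LinearMap.toContinuousLinearMap (Matrix.toEuclideanLin A)‖

noncomputable def tinner {d : ℕ} (A B : Matrix (Fin d) (Fin d) ℝ) : ℝ :=
  (A * Bᵀ).trace

noncomputable def sigmaMin {d₁ d₂ : ℕ} (A : Matrix (Fin d₁) (Fin d₂) ℝ) : ℝ :=
  sInf {s : ℝ | 0 < s ∧ ∃ i, s ^ 2 = (Matrix.isHermitian_conjTranspose_mul_self A).eigenvalues i}

noncomputable def projPerp {d : ℕ} (w : Fin d → ℝ) (Z : Matrix (Fin d) (Fin d) ℝ) :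
    Matrix (Fin d) (Fin d) ℝ :=
  Z - tinner (Matrix.vecMulVec w w) Z • Matrix.vecMulVec w w

open scoped RealInnerProductSpace

/-!
Put `B = Z - 𝒜s (𝒜 Z)` and `C = B V Vᵀ`. The symmetric matrix `Y = C + Cᵀ` has rank at most
`2 r'`, Frobenius norm at most `2 ‖B V‖` (as `‖C‖ = ‖B V‖` since `Vᵀ V = 1`), and
`⟨B, Y⟩ = 2 ‖B V‖²`. Every matrix in the span of `Z` and `Y` has rank at most `r + 2 r'`, so
polarizing the RIP over that plane gives `⟨Z, Y⟩ - ⟨𝒜 Z, 𝒜 Y⟩ ≤ δ ‖Z‖ ‖Y‖`; by adjointness the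
left side is `⟨B, Y⟩`. Hence `2 ‖B V‖² ≤ 2 δ ‖Z‖ ‖B V‖`.
-/

section RestrictedIsometry

variable {E F : Type*} [NormedAddCommGroup E] [InnerProductSpace ℝ E]
  [NormedAddCommGroup F] [InnerProductSpace ℝ F]

theorem two_mul_inner_sub_inner_map_le (T : E →ₗ[ℝ] F) {δ : ℝ} {x y : E}
    (hadd : (1 - δ) * ‖x + y‖ ^ 2 ≤ ‖T (x + y)‖ ^ 2)
    (hsub : ‖T (x - y)‖ ^ 2 ≤ (1 + δ) * ‖x - y‖ ^ 2) :
    2 * (⟪x, y⟫ - ⟪T x, T y⟫) ≤ δ * (‖x‖ ^ 2 + ‖y‖ ^ 2) := by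
  rw [map_add, norm_add_sq_real, norm_add_sq_real] at hadd
  rw [map_sub, norm_sub_sq_real, norm_sub_sq_real] at hsub
  linarith

theorem inner_sub_inner_map_le_of_span_pair (T : E →ₗ[ℝ] F) {δ : ℝ} {x y : E}
    (hT : ∀ u ∈ Submodule.span ℝ {x, y},
      (1 - δ) * ‖u‖ ^ 2 ≤ ‖T u‖ ^ 2 ∧ ‖T u‖ ^ 2 ≤ (1 + δ) * ‖u‖ ^ 2) :
    ⟪x, y⟫ - ⟪T x, T y⟫ ≤ δ * (‖x‖ * ‖y‖) := by
  rcases eq_or_ne x 0 with rfl | hx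
  · simp
  rcases eq_or_ne y 0 with rfl | hy
  · simp
  have hx_mem : x ∈ Submodule.span ℝ {x, y} := Submodule.subset_span (by simp)
  have hy_mem : y ∈ Submodule.span ℝ {x, y} := Submodule.subset_span (by simp)
  -- Weighting `x` by `‖y‖` and `y` by `‖x‖` balances the two squared norms.
  have h := two_mul_inner_sub_inner_map_le T (x := ‖y‖ • x) (y := ‖x‖ • y)
    (hT _ (add_mem (Submodule.smul_mem _ _ hx_mem) (Submodule.smul_mem _ _ hy_mem))).1
    (hT _ (sub_mem (Submodule.smul_mem _ _ hx_mem) (Submodule.smul_mem _ _ hy_mem))).2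
  simp only [map_smul, inner_smul_left, inner_smul_right, norm_smul, norm_norm,
    RCLike.conj_to_real] at h
  have hxy : 0 < ‖x‖ * ‖y‖ := mul_pos (norm_pos_iff.mpr hx) (norm_pos_iff.mpr hy)
  nlinarith

end RestrictedIsometry

namespace Matrix

variable {K : Type*} [Field K] {m n : Type*} [Fintype n]

theorem rank_add_le (A B : Matrix m n K) : (A + B).rank ≤ A.rank + B.rank := by
  rw [rank, mulVecLin_add]
  refine (Submodule.finrank_mono ?_).trans (Submodule.finrank_add_le_finrank_add_finrank _ _)
  rintro _ ⟨v, rfl⟩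
  exact Submodule.add_mem_sup (LinearMap.mem_range_self _ v) (LinearMap.mem_range_self _ v)

theorem rank_smul_le [Fintype m] [DecidableEq m] (c : K) (A : Matrix m n K) :
    (c • A).rank ≤ A.rank := by
  rw [← Matrix.one_mul A, ← Matrix.smul_mul, Matrix.one_mul]
  exact rank_mul_le_right _ _

theorem rank_smul_add_smul_le [Fintype m] (a b : K) (A B : Matrix m n K) :
    (a • A + b • B).rank ≤ A.rank + B.rank := by
  classical
  exact (rank_add_le _ _).trans (add_le_add (rank_smul_le a A) (rank_smul_le b B))

end Matrix

open Matrix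

section Frobenius

variable {m n : Type*}

def matrixToEuclidean : Matrix m n ℝ ≃ₗ[ℝ] EuclideanSpace ℝ (m × n) where
  toFun A := WithLp.toLp 2 fun p => A p.1 p.2
  invFun u := Matrix.of fun i j => u (i, j)
  map_add' _ _ := rfl
  map_smul' _ _ := rfl
  left_inv _ := rfl
  right_inv _ := rfl

@[simp]
theorem matrixToEuclidean_apply (A : Matrix m n ℝ) (p : m × n) :
    matrixToEuclidean A p = A p.1 p.2 := rfl

variable {d₁ d₂ d : ℕ}

theorem frobNorm_eq_norm (A : Matrix (Fin d₁) (Fin d₂) ℝ) :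
    frobNorm A = ‖matrixToEuclidean A‖ := by
  rw [EuclideanSpace.norm_eq, frobNorm, Fintype.sum_prod_type]
  simp

theorem tinner_eq_inner (A B : Matrix (Fin d) (Fin d) ℝ) :
    tinner A B = ⟪matrixToEuclidean A, matrixToEuclidean B⟫ := by
  rw [PiLp.inner_apply, Fintype.sum_prod_type]
  simp [tinner, trace, mul_apply, mul_comm]

theorem frobNorm_nonneg (A : Matrix (Fin d₁) (Fin d₂) ℝ) : 0 ≤ frobNorm A :=
  Real.sqrt_nonneg _

theorem frobNorm_add_le (A B : Matrix (Fin d₁) (Fin d₂) ℝ) :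
    frobNorm (A + B) ≤ frobNorm A + frobNorm B := by
  simpa only [frobNorm_eq_norm, map_add] using norm_add_le _ _

theorem frobNorm_sq (A : Matrix (Fin d₁) (Fin d₂) ℝ) : frobNorm A ^ 2 = (A * Aᵀ).trace := by
  rw [frobNorm, Real.sq_sqrt (by positivity)]
  simp [trace, mul_apply, sq]

theorem frobNorm_transpose (A : Matrix (Fin d₁) (Fin d₂) ℝ) : frobNorm Aᵀ = frobNorm A := by
  rw [frobNorm, frobNorm, Finset.sum_comm]
  rfl

theorem frobNorm_mul_transpose_of_transpose_mul_eq_one {k : ℕ} (A : Matrix (Fin d₁) (Fin k) ℝ)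
    {V : Matrix (Fin d₂) (Fin k) ℝ} (hV : Vᵀ * V = 1) : frobNorm (A * Vᵀ) = frobNorm A := by
  refine (pow_left_inj₀ (frobNorm_nonneg _) (frobNorm_nonneg _) two_ne_zero).mp ?_
  rw [frobNorm_sq, frobNorm_sq, transpose_mul, transpose_transpose, Matrix.mul_assoc,
    ← Matrix.mul_assoc Vᵀ, hV, Matrix.one_mul]

theorem tinner_add_right (A B C : Matrix (Fin d) (Fin d) ℝ) :
    tinner A (B + C) = tinner A B + tinner A C := by
  simp only [tinner_eq_inner, map_add, inner_add_right]

theorem tinner_sub_left (A B C : Matrix (Fin d) (Fin d) ℝ) :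
    tinner (A - B) C = tinner A C - tinner B C := by
  simp only [tinner_eq_inner, map_sub, inner_sub_left]

theorem tinner_transpose_right_of_isSymm {A : Matrix (Fin d) (Fin d) ℝ} (hA : A.IsSymm)
    (B : Matrix (Fin d) (Fin d) ℝ) : tinner A Bᵀ = tinner A B := by
  rw [tinner, tinner, transpose_transpose, ← trace_transpose, transpose_mul, hA.eq, trace_mul_comm]

theorem tinner_mul_mul_transpose {k : ℕ} (A : Matrix (Fin d) (Fin d) ℝ)
    (V : Matrix (Fin d) (Fin k) ℝ) : tinner A (A * V * Vᵀ) = frobNorm (A * V) ^ 2 := by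
  rw [tinner, frobNorm_sq, transpose_mul, transpose_transpose, ← Matrix.mul_assoc]

end Frobenius

section RIP

variable {d m k : ℕ}

theorem sum_sq_eq_norm_toLp_sq (y : Fin m → ℝ) : ∑ i, y i ^ 2 = ‖WithLp.toLp 2 y‖ ^ 2 := by
  simp [EuclideanSpace.real_norm_sq_eq]

theorem sum_mul_eq_inner_toLp (y z : Fin m → ℝ) :
    ∑ i, y i * z i = ⟪WithLp.toLp 2 y, WithLp.toLp 2 z⟫ := by
  simp [PiLp.inner_apply, mul_comm]

theorem tinner_sub_sum_le_of_rip (𝒜 : Matrix (Fin d) (Fin d) ℝ →ₗ[ℝ] (Fin m → ℝ)) {δ : ℝ}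
    (hRIP : ∀ Z : Matrix (Fin d) (Fin d) ℝ, Z.IsSymm → Z.rank ≤ k →
      (1 - δ) * frobNorm Z ^ 2 ≤ ∑ i, 𝒜 Z i ^ 2 ∧ ∑ i, 𝒜 Z i ^ 2 ≤ (1 + δ) * frobNorm Z ^ 2)
    {X Y : Matrix (Fin d) (Fin d) ℝ} (hX : X.IsSymm) (hY : Y.IsSymm)
    (hrank : X.rank + Y.rank ≤ k) :
    tinner X Y - ∑ i, 𝒜 X i * 𝒜 Y i ≤ δ * (frobNorm X * frobNorm Y) := by
  let T : EuclideanSpace ℝ (Fin d × Fin d) →ₗ[ℝ] EuclideanSpace ℝ (Fin m) :=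
    (WithLp.linearEquiv 2 ℝ (Fin m → ℝ)).symm.toLinearMap ∘ₗ 𝒜 ∘ₗ
      matrixToEuclidean.symm.toLinearMap
  have hT : ∀ M, T (matrixToEuclidean M) = WithLp.toLp 2 (𝒜 M) := fun M => by simp [T]
  rw [tinner_eq_inner, frobNorm_eq_norm, frobNorm_eq_norm, sum_mul_eq_inner_toLp, ← hT, ← hT]
  refine inner_sub_inner_map_le_of_span_pair T fun u hu => ?_
  obtain ⟨a, b, rfl⟩ := Submodule.mem_span_pair.mp hu
  have h := hRIP (a • X + b • Y) ((hX.smul a).add (hY.smul b))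
    ((rank_smul_add_smul_le a b X Y).trans hrank)
  rwa [sum_sq_eq_norm_toLp_sq, ← hT, frobNorm_eq_norm, map_add, map_smul, map_smul] at h

end RIP

theorem statement1 {d m r r' : ℕ} (δ : ℝ) (hδ : 0 ≤ δ)
    (𝒜 : Matrix (Fin d) (Fin d) ℝ →ₗ[ℝ] (Fin m → ℝ))
    (𝒜s : (Fin m → ℝ) →ₗ[ℝ] Matrix (Fin d) (Fin d) ℝ)
    (hsym : ∀ y, (𝒜s y).IsSymm)
    (hadj : ∀ (y : Fin m → ℝ) (Z : Matrix (Fin d) (Fin d) ℝ), Z.IsSymm →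
      tinner (𝒜s y) Z = ∑ i, y i * 𝒜 Z i)
    (hRIP : ∀ Z : Matrix (Fin d) (Fin d) ℝ, Z.IsSymm → Z.rank ≤ r + 2 * r' →
      (1 - δ) * frobNorm Z ^ 2 ≤ ∑ i, 𝒜 Z i ^ 2 ∧
        ∑ i, 𝒜 Z i ^ 2 ≤ (1 + δ) * frobNorm Z ^ 2)
    (V : Matrix (Fin d) (Fin r') ℝ) (hV : Vᵀ * V = 1)
    (Z : Matrix (Fin d) (Fin d) ℝ) (hZ : Z.IsSymm) (hr : Z.rank ≤ r) :
    frobNorm ((Z - 𝒜s (𝒜 Z)) * V) ≤ δ * frobNorm Z := by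
  set B := Z - 𝒜s (𝒜 Z)
  have hB : B.IsSymm := hZ.sub (hsym _)
  set C := B * V * Vᵀ
  have hY : (C + Cᵀ).IsSymm := by
    rw [IsSymm, transpose_add, transpose_transpose, add_comm]
  have hYrank : (C + Cᵀ).rank ≤ 2 * r' := by
    have hC : C.rank ≤ r' := (rank_mul_le_left _ _).trans (rank_le_width _)
    have := rank_add_le C Cᵀ
    rw [rank_transpose] at this
    omega
  have hBY : tinner B (C + Cᵀ) = 2 * frobNorm (B * V) ^ 2 := by
    rw [tinner_add_right, tinner_transpose_right_of_isSymm hB, tinner_mul_mul_transpose]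
    ring
  have hYnorm : frobNorm (C + Cᵀ) ≤ 2 * frobNorm (B * V) := by
    have := frobNorm_add_le C Cᵀ
    rwa [frobNorm_transpose, frobNorm_mul_transpose_of_transpose_mul_eq_one _ hV,
      ← two_mul] at this
  have hcross := tinner_sub_sum_le_of_rip 𝒜 hRIP hZ hY (by omega)
  rw [← hadj _ _ hY, ← tinner_sub_left, hBY] at hcross
  have hsq : 2 * frobNorm (B * V) ^ 2 ≤ 2 * (δ * frobNorm Z * frobNorm (B * V)) :=
    calc 2 * frobNorm (B * V) ^ 2 ≤ δ * (frobNorm Z * frobNorm (C + Cᵀ)) := hcross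
      _ ≤ δ * (frobNorm Z * (2 * frobNorm (B * V))) :=
        mul_le_mul_of_nonneg_left (mul_le_mul_of_nonneg_left hYnorm (frobNorm_nonneg Z)) hδ
      _ = 2 * (δ * frobNorm Z * frobNorm (B * V)) := by ring
  nlinarith [frobNorm_nonneg (B * V), mul_nonneg hδ (frobNorm_nonneg Z)]
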